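/- Let H=(V,E,w) be a honeycomb and, for i=1,2,3 and s ∈ {+,−}, let B_i^s denote the set of semiinfinite edges of H of the form Ξ_i^s(·). Then the quantity w(B_i⁺) − w(B_i⁻) is the same for i=1,2,3, where w(B') denotes the sum of w(e) over e ∈ B'. -/

import Mathlib

open scoped BigOperators

attribute [local instance] Classical.propDecidable

noncomputable section

/-- Points of the plane. -/
abbrev Pt : Type := ℝ × ℝ

/-- Inner product on the plane. -/
def pdot (a b : Pt) : ℝ := a.1 * b.1 + a.2 * b.2

/-- The three generating vectors ξ₁ = (1,0), ξ₂ = (−1/2, √3/2), ξ₃ = (−1/2, −√3/2). -/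
noncomputable def xiv : Fin 3 → Pt
  | 0 => ((1 : ℝ), (0 : ℝ))
  | 1 => (-(1 / 2 : ℝ), Real.sqrt 3 / 2)
  | 2 => (-(1 / 2 : ℝ), -(Real.sqrt 3 / 2))

/-- Dual coordinates d_i(x) = −x·ξ_i. -/
noncomputable def dcoord (i : Fin 3) (x : Pt) : ℝ := -(pdot x (xiv i))

/-- Direction of the ray Ξ_i^s(·): ξ_i rotated by −90° for s = +(true), by +90° for
s = −(false), so that Ξ_i⁺(v)−v, ℝ₊ξ_i, Ξ_i⁻(v)−v follow anticlockwise. -/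
noncomputable def rayDir (i : Fin 3) (s : Bool) : Pt :=
  if s then ((xiv i).2, -(xiv i).1) else (-(xiv i).2, (xiv i).1)

/-- The ray Ξ_i^s(v). -/
def XiRay (i : Fin 3) (s : Bool) (v : Pt) : Set Pt :=
  {x | ∃ t : ℝ, 0 ≤ t ∧ x = v + t • rayDir i s}

/-- A finite line (nondegenerate segment). -/
def IsSegL (S : Set Pt) : Prop := ∃ a b : Pt, a ≠ b ∧ S = segment ℝ a b

/-- A semiinfinite line (ray) with end a. -/
def IsRayFrom (a : Pt) (S : Set Pt) : Prop :=
  ∃ d : Pt, d ≠ 0 ∧ S = {x | ∃ t : ℝ, 0 ≤ t ∧ x = a + t • d}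

/-- A semiinfinite line (ray). -/
def IsRayL (S : Set Pt) : Prop := ∃ a : Pt, IsRayFrom a S

/-- A fully infinite line. -/
def IsFullLineL (S : Set Pt) : Prop := ∃ a d : Pt, d ≠ 0 ∧ S = {x | ∃ t : ℝ, x = a + t • d}

/-- A line: a segment, a ray or a full line. -/
def IsLineL (S : Set Pt) : Prop := IsSegL S ∨ IsRayL S ∨ IsFullLineL S

/-- `S` is perpendicular to ξ_i, i.e. the dual coordinate d_i is constant on S. -/
def PerpTo (i : Fin 3) (S : Set Pt) : Prop := ∀ x ∈ S, ∀ y ∈ S, pdot (x - y) (xiv i) = 0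

/-- w_i^s(v): the total weight of the lines of the system whose intersection with
Ξ_i^s(v) contains v and is a line (not a point). -/
noncomputable def wis (L : Finset (Set Pt)) (w : Set Pt → ℤ) (i : Fin 3) (s : Bool)
    (v : Pt) : ℤ :=
  ∑ ℓ ∈ L.filter (fun ℓ => v ∈ ℓ ∧ IsLineL (ℓ ∩ XiRay i s v)), w ℓ

/-- A Ξ-system: a finite set of lines, each perpendicular to some ξ_i. -/
def IsXiSystem (L : Finset (Set Pt)) : Prop := ∀ ℓ ∈ L, IsLineL ℓ ∧ ∃ i : Fin 3, PerpTo i ℓ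

/-- A pre-honeycomb: a Ξ-system with all w_i^s(v) nonnegative satisfying the
divergency (zero-tension) condition at every point. -/
def IsPreHoneycomb (L : Finset (Set Pt)) (w : Set Pt → ℤ) : Prop :=
  IsXiSystem L ∧ (∀ (v : Pt) (i : Fin 3) (s : Bool), 0 ≤ wis L w i s v) ∧
  ∀ (v : Pt) (i j : Fin 3),
    wis L w i true v - wis L w i false v = wis L w j true v - wis L w j false v

/-- The divergency div_w(v). -/
noncomputable def divw (L : Finset (Set Pt)) (w : Set Pt → ℤ) (v : Pt) : ℤ :=
  wis L w 0 true v - wis L w 0 false v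

/-- An interior (non-end) point of a line. -/
def InteriorPt (S : Set Pt) (x : Pt) : Prop :=
  x ∈ S ∧ ∃ d : Pt, d ≠ 0 ∧ ∃ ε : ℝ, 0 < ε ∧ ∀ t : ℝ, |t| ≤ ε → x + t • d ∈ S

/-- `v` is an end of the line `S` (so `S` is incident to `v` as a graph edge). -/
def IsEnd (v : Pt) (S : Set Pt) : Prop := v ∈ S ∧ ¬ InteriorPt S v

/-- A honeycomb: a (non-standard) planar graph with a nonempty finite vertex set, whose
edges are positively weighted lines, each vertex incident with at least 3 edges, no
interior point of an edge lying on another edge, the ends of edges being vertices, and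
the weighted edge set forming a pre-honeycomb. -/
structure Honeycomb : Type where
  verts : Finset Pt
  edges : Finset (Set Pt)
  w : Set Pt → ℤ
  verts_nonempty : verts.Nonempty
  degree : ∀ v ∈ verts, 3 ≤ (edges.filter fun e => IsEnd v e).card
  no_cross : ∀ e ∈ edges, ∀ e' ∈ edges, e ≠ e' → ∀ x : Pt, InteriorPt e x → x ∉ e'
  w_pos : ∀ e ∈ edges, 0 < w e
  ends_mem : ∀ e ∈ edges, ∀ x : Pt, IsEnd x e → x ∈ verts
  edge_touch : ∀ e ∈ edges, ∃ v ∈ verts, v ∈ e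
  pre : IsPreHoneycomb edges w

/-- The set B_i^s of semiinfinite edges of H of the form Ξ_i^s(·). -/
noncomputable def Honeycomb.bdry (H : Honeycomb) (i : Fin 3) (s : Bool) : Finset (Set Pt) :=
  H.edges.filter fun e => ∃ v : Pt, e = XiRay i s v


/-!
Summing the zero-tension condition over the vertices shows that
`∑ v, (w_i⁺(v) - w_i⁻(v))` does not depend on `i`. Exchanging the sums, each edge `e`
contributes `w(e)` times `∑ v, ([e ∩ Ξ_i⁺(v) is a line] - [e ∩ Ξ_i⁻(v) is a line])`.
This vanishes unless `e` is parallel to `Ξ_i`. Then `e = {a + t r | m ≤ t ≤ M}` for a unit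
vector `r ⊥ ξ_i` and `m < M` in `EReal`; the summand is `+1` at a finite lower end, `-1` at
a finite upper end and `0` elsewhere, and both finite ends are vertices. So `e` contributes
`w(e) ([m ≠ ⊥] - [M ≠ ⊤])`, which is `w(e)` for a ray `Ξ_i⁺(·)`, `-w(e)` for a ray
`Ξ_i⁻(·)` and `0` otherwise.
-/

open Set

section Directions

def perpDir (i : Fin 3) : Pt := rayDir i true

lemma rayDir_false_eq_neg (i : Fin 3) : rayDir i false = -perpDir i := by
  simp [rayDir, perpDir]

lemma pdot_smul_left (c : ℝ) (x y : Pt) : pdot (c • x) y = c * pdot x y := by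
  simp only [pdot, Prod.smul_fst, Prod.smul_snd, smul_eq_mul]; ring

lemma pdot_neg_left (x y : Pt) : pdot (-x) y = -pdot x y := by
  simp only [pdot, Prod.fst_neg, Prod.snd_neg]; ring

lemma xiv_normSq (i : Fin 3) : (xiv i).1 ^ 2 + (xiv i).2 ^ 2 = 1 := by
  have h3 := Real.sq_sqrt (show (0 : ℝ) ≤ 3 by norm_num)
  fin_cases i <;> simp [xiv] <;> nlinarith

lemma perpDir_ne_zero (i : Fin 3) : perpDir i ≠ 0 := by
  intro h
  have h1 : (xiv i).2 = 0 := congrArg Prod.fst h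
  have h2 : -(xiv i).1 = 0 := congrArg Prod.snd h
  nlinarith [xiv_normSq i]

lemma pdot_perpDir_xiv_ne_zero {i j : Fin 3} (h : i ≠ j) : pdot (perpDir i) (xiv j) ≠ 0 := by
  fin_cases i <;> fin_cases j <;> simp_all [perpDir, rayDir, xiv, pdot] <;> ring_nf <;>
    positivity

lemma pdot_rayDir_xiv_ne_zero {i j : Fin 3} (h : i ≠ j) (s : Bool) :
    pdot (rayDir i s) (xiv j) ≠ 0 := by
  cases s
  · rw [rayDir_false_eq_neg, pdot_neg_left]
    exact neg_ne_zero.mpr (pdot_perpDir_xiv_ne_zero h)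
  · exact pdot_perpDir_xiv_ne_zero h

lemma eq_smul_perpDir_of_pdot_xiv_eq_zero {i : Fin 3} {x : Pt} (h : pdot x (xiv i) = 0) :
    x = pdot x (perpDir i) • perpDir i := by
  have hn := xiv_normSq i
  simp only [pdot, perpDir, rayDir, if_true] at h ⊢
  ext
  · simp only [Prod.smul_fst, smul_eq_mul]; linear_combination (-x.1) * hn + (xiv i).1 * h
  · simp only [Prod.smul_snd, smul_eq_mul]; linear_combination (-x.2) * hn + (xiv i).2 * h

end Directions

section LinePart

variable (a : Pt) (i : Fin 3)

def linePart (I : Set ℝ) : Set Pt := (fun t : ℝ => a + t • perpDir i) '' I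

lemma linePoint_injective : Function.Injective fun t : ℝ => a + t • perpDir i :=
  fun _ _ h => smul_left_injective ℝ (perpDir_ne_zero i) (add_left_cancel h)

lemma linePart_injective : Function.Injective (linePart a i) :=
  Set.image_injective.mpr (linePoint_injective a i)

lemma linePart_inter (I J : Set ℝ) : linePart a i I ∩ linePart a i J = linePart a i (I ∩ J) :=
  (Set.image_inter (linePoint_injective a i)).symm

variable {a i}

lemma mem_linePart {I : Set ℝ} {x : Pt} :
    x ∈ linePart a i I ↔ ∃ t ∈ I, a + t • perpDir i = x :=
  Iff.rfl

lemma linePoint_mem_linePart {I : Set ℝ} {t : ℝ} (ht : t ∈ I) :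
    a + t • perpDir i ∈ linePart a i I :=
  Set.mem_image_of_mem _ ht

variable (a i)

lemma xiRay_true_eq_linePart (u : ℝ) :
    XiRay i true (a + u • perpDir i) = linePart a i (Ici u) := by
  ext x
  constructor
  · rintro ⟨t, ht, rfl⟩
    exact ⟨u + t, by simpa using ht, by rw [perpDir]; module⟩
  · rintro ⟨t, ht, rfl⟩
    exact ⟨t - u, sub_nonneg.mpr ht, by rw [perpDir]; module⟩

lemma xiRay_false_eq_linePart (u : ℝ) :
    XiRay i false (a + u • perpDir i) = linePart a i (Iic u) := by
  ext x
  constructor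
  · rintro ⟨t, ht, rfl⟩
    exact ⟨u - t, by simpa using ht, by rw [rayDir_false_eq_neg]; module⟩
  · rintro ⟨t, ht, rfl⟩
    exact ⟨u - t, sub_nonneg.mpr ht, by rw [rayDir_false_eq_neg]; module⟩

lemma self_mem_xiRay (s : Bool) (v : Pt) : v ∈ XiRay i s v :=
  ⟨0, le_rfl, by simp⟩

lemma exists_linePart_eq_xiRay_true_iff (I : Set ℝ) :
    (∃ v, linePart a i I = XiRay i true v) ↔ ∃ u, I = Ici u := by
  constructor
  · rintro ⟨v, h⟩
    obtain ⟨t, -, rfl⟩ := mem_linePart.mp (h ▸ self_mem_xiRay i true v)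
    rw [xiRay_true_eq_linePart] at h
    exact ⟨t, linePart_injective a i h⟩
  · rintro ⟨u, rfl⟩
    exact ⟨_, (xiRay_true_eq_linePart a i u).symm⟩

lemma exists_linePart_eq_xiRay_false_iff (I : Set ℝ) :
    (∃ v, linePart a i I = XiRay i false v) ↔ ∃ u, I = Iic u := by
  constructor
  · rintro ⟨v, h⟩
    obtain ⟨t, -, rfl⟩ := mem_linePart.mp (h ▸ self_mem_xiRay i false v)
    rw [xiRay_false_eq_linePart] at h
    exact ⟨t, linePart_injective a i h⟩
  · rintro ⟨u, rfl⟩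
    exact ⟨_, (xiRay_false_eq_linePart a i u).symm⟩

end LinePart

section ERealIcc

/-- Parameter sets of the lines perpendicular to some `ξ_i`: infinite ends of rays and full
lines are `⊥` and `⊤`. -/
def erealIcc (m M : EReal) : Set ℝ := (↑) ⁻¹' Icc m M

@[simp] lemma erealIcc_coe_coe (x y : ℝ) : erealIcc x y = Icc x y := EReal.preimage_coe_Icc x y

@[simp] lemma erealIcc_coe_top (x : ℝ) : erealIcc x ⊤ = Ici x := by
  rw [erealIcc, Icc_top, EReal.preimage_coe_Ici]

@[simp] lemma erealIcc_bot_coe (y : ℝ) : erealIcc ⊥ y = Iic y := by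
  rw [erealIcc, Icc_bot, EReal.preimage_coe_Iic]

@[simp] lemma erealIcc_bot_top : erealIcc ⊥ ⊤ = univ := by
  simp [erealIcc]

lemma erealIcc_inter_erealIcc (m M m' M' : EReal) :
    erealIcc m M ∩ erealIcc m' M' = erealIcc (max m m') (min M M') := by
  rw [erealIcc, erealIcc, ← preimage_inter, Icc_inter_Icc, erealIcc]

lemma erealIcc_subsingleton {m M : EReal} (h : M ≤ m) : (erealIcc m M).Subsingleton :=
  fun _ ⟨hs₁, hs₂⟩ _ ⟨ht₁, ht₂⟩ =>
    EReal.coe_le_coe_iff.mp (hs₂.trans (h.trans ht₁)) |>.antisymm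
      (EReal.coe_le_coe_iff.mp (ht₂.trans (h.trans hs₁)))

end ERealIcc

section Lines

lemma not_isLineL_of_subsingleton {S : Set Pt} (h : S.Subsingleton) : ¬ IsLineL S := by
  have key : ∀ a d : Pt, d ≠ 0 → a ∈ S → a + d ∈ S → False := fun a d hd ha had =>
    hd (left_eq_add.mp (h ha had))
  rintro (⟨a, b, hab, rfl⟩ | ⟨a, d, hd, rfl⟩ | ⟨a, d, hd, rfl⟩)
  · exact hab (h (left_mem_segment ℝ a b) (right_mem_segment ℝ a b))
  · exact key a d hd ⟨0, le_rfl, by simp⟩ ⟨1, zero_le_one, by simp⟩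
  · exact key a d hd ⟨0, by simp⟩ ⟨1, by simp⟩

lemma isLineL_xiRay (i : Fin 3) (s : Bool) (v : Pt) : IsLineL (XiRay i s v) := by
  refine Or.inr (Or.inl ⟨v, rayDir i s, ?_, rfl⟩)
  cases s
  · simpa [rayDir_false_eq_neg] using perpDir_ne_zero i
  · exact perpDir_ne_zero i

variable (a : Pt) (i : Fin 3)

lemma linePart_eq_image_lineMap (I : Set ℝ) :
    linePart a i I = AffineMap.lineMap a (a + perpDir i) '' I := by
  refine congrArg (· '' I) (funext fun t => ?_)
  rw [AffineMap.lineMap_apply_module]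
  module

lemma isLineL_linePart_erealIcc_iff {m M : EReal} :
    IsLineL (linePart a i (erealIcc m M)) ↔ m < M := by
  refine ⟨fun h => not_le.mp fun hle =>
    not_isLineL_of_subsingleton ((erealIcc_subsingleton hle).image _) h, fun h => ?_⟩
  induction m using EReal.rec with
  | bot =>
    induction M using EReal.rec with
    | bot => exact absurd h (lt_irrefl _)
    | coe y =>
      rw [erealIcc_bot_coe, ← xiRay_false_eq_linePart]
      exact isLineL_xiRay i false _
    | top =>
      refine Or.inr (Or.inr ⟨a, perpDir i, perpDir_ne_zero i, ?_⟩)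
      ext x
      simp [linePart, eq_comm]
  | coe x =>
    induction M using EReal.rec with
    | bot => exact absurd h not_lt_bot
    | coe y =>
      have hxy : x < y := EReal.coe_lt_coe_iff.mp h
      refine Or.inl ⟨a + x • perpDir i, a + y • perpDir i,
        fun he => hxy.ne (linePoint_injective a i he), ?_⟩
      rw [erealIcc_coe_coe, ← segment_eq_Icc hxy.le, linePart_eq_image_lineMap, image_segment]
      simp only [AffineMap.lineMap_apply_module]
      congr 1 <;> module
    | top =>
      rw [erealIcc_coe_top, ← xiRay_true_eq_linePart]
      exact isLineL_xiRay i true _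
  | top => exact absurd h not_top_lt

lemma segment_eq_linePart (c : ℝ) :
    segment ℝ a (a + c • perpDir i) = linePart a i (erealIcc ↑(min 0 c) ↑(max 0 c)) := by
  rw [erealIcc_coe_coe, ← segment_eq_Icc', linePart_eq_image_lineMap, image_segment]
  simp only [AffineMap.lineMap_apply_module]
  congr 1 <;> module

lemma setOf_ray_smul_of_pos {c : ℝ} (hc : 0 < c) (d : Pt) :
    {x : Pt | ∃ t : ℝ, 0 ≤ t ∧ x = a + t • (c • d)} =
      {x | ∃ t : ℝ, 0 ≤ t ∧ x = a + t • d} := by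
  ext x
  constructor
  · rintro ⟨t, ht, rfl⟩
    exact ⟨t * c, by positivity, by rw [smul_smul]⟩
  · rintro ⟨t, ht, rfl⟩
    exact ⟨t / c, by positivity, by rw [smul_smul, div_mul_cancel₀ _ hc.ne']⟩

lemma exists_ray_eq_linePart {c : ℝ} (hc : c ≠ 0) :
    ∃ m M, {x : Pt | ∃ t : ℝ, 0 ≤ t ∧ x = a + t • (c • perpDir i)} =
      linePart a i (erealIcc m M) := by
  rcases hc.lt_or_gt with hneg | hpos
  · refine ⟨⊥, ↑(0 : ℝ), ?_⟩
    rw [show c • perpDir i = (-c) • rayDir i false by rw [rayDir_false_eq_neg]; module,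
      setOf_ray_smul_of_pos a (neg_pos.mpr hneg), erealIcc_bot_coe, ← xiRay_false_eq_linePart,
      zero_smul, add_zero]
    rfl
  · refine ⟨↑(0 : ℝ), ⊤, ?_⟩
    rw [setOf_ray_smul_of_pos a hpos, erealIcc_coe_top, ← xiRay_true_eq_linePart, zero_smul,
      add_zero]
    rfl

lemma fullLine_eq_linePart {c : ℝ} (hc : c ≠ 0) :
    {x : Pt | ∃ t : ℝ, x = a + t • (c • perpDir i)} = linePart a i (erealIcc ⊥ ⊤) := by
  rw [erealIcc_bot_top]
  ext x
  constructor
  · rintro ⟨t, rfl⟩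
    exact ⟨t * c, trivial, by rw [smul_smul]⟩
  · rintro ⟨t, -, rfl⟩
    exact ⟨t / c, by rw [smul_smul, div_mul_cancel₀ _ hc]⟩

variable {a i}

lemma PerpTo.exists_eq_add_smul {e : Set Pt} (hp : PerpTo i e) {x y : Pt} (hx : x ∈ e)
    (hy : y ∈ e) : ∃ c : ℝ, y = x + c • perpDir i :=
  ⟨_, by rw [← eq_smul_perpDir_of_pdot_xiv_eq_zero (hp y hy x hx)]; abel⟩

lemma exists_eq_linePart_erealIcc {e : Set Pt} (he : IsLineL e) (hp : PerpTo i e) :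
    ∃ a m M, e = linePart a i (erealIcc m M) := by
  rcases he with ⟨a, b, -, rfl⟩ | ⟨a, d, hd, rfl⟩ | ⟨a, d, hd, rfl⟩
  · obtain ⟨c, rfl⟩ :=
      hp.exists_eq_add_smul (left_mem_segment ℝ a b) (right_mem_segment ℝ a b)
    exact ⟨a, _, _, segment_eq_linePart a i c⟩
  all_goals
    obtain ⟨c, hdc⟩ :=
      hp.exists_eq_add_smul (x := a) (y := a + d) ⟨0, by simp⟩ ⟨1, by simp⟩
    obtain rfl := add_right_injective a hdc
    have hc : c ≠ 0 := fun h => hd (by rw [h, zero_smul])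
  · exact ⟨a, exists_ray_eq_linePart a i hc⟩
  · exact ⟨a, ⊥, ⊤, fullLine_eq_linePart a i hc⟩

end Lines

lemma not_interiorPt_linePart (a : Pt) (i : Fin 3) {I : Set ℝ} {u : ℝ}
    (hu : ∀ t₁ ∈ I, ∀ t₂ ∈ I, t₁ + t₂ = 2 * u → t₁ = u) :
    ¬ InteriorPt (linePart a i I) (a + u • perpDir i) := by
  rintro ⟨-, d, hd, ε, hε, hS⟩
  obtain ⟨t₁, h₁, e₁⟩ := hS ε (abs_of_pos hε).le
  obtain ⟨t₂, h₂, e₂⟩ := hS (-ε) (by rw [abs_neg, abs_of_pos hε])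
  have hsum : t₁ + t₂ = 2 * u := linePoint_injective a i <| by
    linear_combination (norm := module) e₁ + e₂
  have hεd : ε • d = 0 := by
    rw [hu t₁ h₁ t₂ h₂ hsum] at e₁
    linear_combination (norm := module) -e₁
  exact hd ((smul_eq_zero.mp hεd).resolve_left hε.ne')

def edgeDiv (e : Set Pt) (i : Fin 3) (v : Pt) : ℤ :=
  (if v ∈ e ∧ IsLineL (e ∩ XiRay i true v) then 1 else 0) -
    (if v ∈ e ∧ IsLineL (e ∩ XiRay i false v) then 1 else 0)

lemma edgeDiv_linePart_erealIcc (a : Pt) (i : Fin 3) {m M : EReal} (hmM : m < M) (v : Pt) :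
    edgeDiv (linePart a i (erealIcc m M)) i v =
      (if ∃ u : ℝ, ↑u = m ∧ v = a + u • perpDir i then 1 else 0) -
        (if ∃ u : ℝ, ↑u = M ∧ v = a + u • perpDir i then 1 else 0) := by
  by_cases hv : v ∈ linePart a i (erealIcc m M)
  · obtain ⟨u, ⟨hmu, huM⟩, rfl⟩ := hv
    have hplus : linePart a i (erealIcc m M) ∩ XiRay i true (a + u • perpDir i) =
        linePart a i (erealIcc u M) := by
      rw [xiRay_true_eq_linePart, ← erealIcc_coe_top, linePart_inter, erealIcc_inter_erealIcc,
        max_eq_right hmu, min_top_right]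
    have hminus : linePart a i (erealIcc m M) ∩ XiRay i false (a + u • perpDir i) =
        linePart a i (erealIcc m u) := by
      rw [xiRay_false_eq_linePart, ← erealIcc_bot_coe, linePart_inter, erealIcc_inter_erealIcc,
        max_bot_right, min_eq_right huM]
    simp only [edgeDiv, hplus, hminus, isLineL_linePart_erealIcc_iff,
      (linePoint_injective a i).eq_iff, linePoint_mem_linePart (show u ∈ erealIcc m M from
        ⟨hmu, huM⟩), true_and, exists_eq_right']
    split_ifs <;> first | rfl | (exfalso; order)
  · have hm : ¬ ∃ u : ℝ, ↑u = m ∧ v = a + u • perpDir i := by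
      rintro ⟨u, rfl, rfl⟩
      exact hv (linePoint_mem_linePart ⟨le_rfl, hmM.le⟩)
    have hM : ¬ ∃ u : ℝ, ↑u = M ∧ v = a + u • perpDir i := by
      rintro ⟨u, rfl, rfl⟩
      exact hv (linePoint_mem_linePart ⟨hmM.le, le_rfl⟩)
    simp only [edgeDiv, hv, hm, hM, false_and, if_false, sub_self]

lemma sum_ite_exists_linePoint (a : Pt) (i : Fin 3) (V : Finset Pt) (p : EReal)
    (hV : ∀ u : ℝ, ↑u = p → a + u • perpDir i ∈ V) :
    ∑ v ∈ V, (if ∃ u : ℝ, ↑u = p ∧ v = a + u • perpDir i then (1 : ℤ) else 0) =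
      if ∃ u : ℝ, ↑u = p then 1 else 0 := by
  by_cases hp : ∃ u : ℝ, ↑u = p
  · obtain ⟨u, rfl⟩ := hp
    simp only [EReal.coe_eq_coe_iff, exists_eq_left, Finset.sum_ite_eq' V, hV u rfl,
      exists_eq, if_true]
  · simp only [not_exists.mp hp, false_and, exists_false, if_false, Finset.sum_const_zero]

lemma ne_Ici_of_bddAbove {I : Set ℝ} (h : BddAbove I) (u : ℝ) : I ≠ Ici u :=
  fun e => not_bddAbove_Ici u (e ▸ h)

lemma ne_Iic_of_bddBelow {I : Set ℝ} (h : BddBelow I) (u : ℝ) : I ≠ Iic u :=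
  fun e => not_bddBelow_Iic u (e ▸ h)

lemma univ_ne_Ici (u : ℝ) : (univ : Set ℝ) ≠ Ici u :=
  fun e => not_bddBelow_univ (e ▸ bddBelow_Ici)

lemma univ_ne_Iic (u : ℝ) : (univ : Set ℝ) ≠ Iic u :=
  fun e => not_bddAbove_univ (e ▸ bddAbove_Iic)

def boundarySign (e : Set Pt) (i : Fin 3) : ℤ :=
  (if ∃ v, e = XiRay i true v then 1 else 0) - (if ∃ v, e = XiRay i false v then 1 else 0)

lemma boundarySign_linePart_erealIcc (a : Pt) (i : Fin 3) {m M : EReal} (hmM : m < M) :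
    boundarySign (linePart a i (erealIcc m M)) i =
      (if ∃ u : ℝ, ↑u = m then 1 else 0) - (if ∃ u : ℝ, ↑u = M then 1 else 0) := by
  rw [boundarySign, exists_linePart_eq_xiRay_true_iff, exists_linePart_eq_xiRay_false_iff]
  induction m using EReal.rec with
  | bot =>
    induction M using EReal.rec with
    | bot => exact absurd hmM (lt_irrefl _)
    | coe y => simp [ne_Ici_of_bddAbove bddAbove_Iic]
    | top => simp [univ_ne_Ici, univ_ne_Iic]
  | coe x =>
    induction M using EReal.rec with
    | bot => exact absurd hmM not_lt_bot
    | coe y => simp [ne_Ici_of_bddAbove bddAbove_Icc, ne_Iic_of_bddBelow bddBelow_Icc]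
    | top => simp [ne_Iic_of_bddBelow bddBelow_Ici]
  | top => exact absurd hmM not_top_lt

lemma inter_xiRay_subsingleton {i j : Fin 3} (hij : i ≠ j) {e : Set Pt} (hp : PerpTo j e)
    (s : Bool) (v : Pt) : (e ∩ XiRay i s v).Subsingleton := by
  rintro _ ⟨hx, t₁, -, rfl⟩ _ ⟨hy, t₂, -, rfl⟩
  have h := hp _ hx _ hy
  rw [show v + t₁ • rayDir i s - (v + t₂ • rayDir i s) = (t₁ - t₂) • rayDir i s by
    module, pdot_smul_left] at h
  rw [sub_eq_zero.mp ((mul_eq_zero.mp h).resolve_right (pdot_rayDir_xiv_ne_zero hij s))]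

lemma edgeDiv_of_perpTo_of_ne {i j : Fin 3} (hij : i ≠ j) {e : Set Pt} (hp : PerpTo j e)
    (v : Pt) : edgeDiv e i v = 0 := by
  simp [edgeDiv, not_isLineL_of_subsingleton (inter_xiRay_subsingleton hij hp _ v)]

lemma boundarySign_of_perpTo_of_ne {i j : Fin 3} (hij : i ≠ j) {e : Set Pt} (hp : PerpTo j e) :
    boundarySign e i = 0 := by
  have h : ∀ s v, e ≠ XiRay i s v := by
    rintro s v rfl
    exact not_isLineL_of_subsingleton (by simpa using inter_xiRay_subsingleton hij hp s v)
      (isLineL_xiRay i s v)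
  simp [boundarySign, h]

lemma sum_edgeDiv_eq_boundarySign (V : Finset Pt) (i : Fin 3) {e : Set Pt} (he : IsLineL e)
    (hp : ∃ j, PerpTo j e) (hV : ∀ x, IsEnd x e → x ∈ V) :
    ∑ v ∈ V, edgeDiv e i v = boundarySign e i := by
  by_cases hpi : PerpTo i e
  · obtain ⟨a, m, M, rfl⟩ := exists_eq_linePart_erealIcc he hpi
    have hmM := (isLineL_linePart_erealIcc_iff a i).mp he
    have hlower (u : ℝ) (hu : ↑u = m) : a + u • perpDir i ∈ V := by
      subst hu
      refine hV _ ⟨linePoint_mem_linePart ⟨le_rfl, hmM.le⟩, not_interiorPt_linePart a i ?_⟩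
      intro t₁ h₁ t₂ h₂ hs
      linarith [EReal.coe_le_coe_iff.mp h₁.1, EReal.coe_le_coe_iff.mp h₂.1]
    have hupper (u : ℝ) (hu : ↑u = M) : a + u • perpDir i ∈ V := by
      subst hu
      refine hV _ ⟨linePoint_mem_linePart ⟨hmM.le, le_rfl⟩, not_interiorPt_linePart a i ?_⟩
      intro t₁ h₁ t₂ h₂ hs
      linarith [EReal.coe_le_coe_iff.mp h₁.2, EReal.coe_le_coe_iff.mp h₂.2]
    rw [Finset.sum_congr rfl fun v _ => edgeDiv_linePart_erealIcc a i hmM v,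
      Finset.sum_sub_distrib, sum_ite_exists_linePoint a i V m hlower,
      sum_ite_exists_linePoint a i V M hupper, boundarySign_linePart_erealIcc a i hmM]
  · obtain ⟨j, hpj⟩ := hp
    have hij : i ≠ j := fun h => hpi (h ▸ hpj)
    rw [boundarySign_of_perpTo_of_ne hij hpj,
      Finset.sum_eq_zero fun v _ => edgeDiv_of_perpTo_of_ne hij hpj v]

lemma wis_sub_wis (L : Finset (Set Pt)) (w : Set Pt → ℤ) (i : Fin 3) (v : Pt) :
    wis L w i true v - wis L w i false v = ∑ e ∈ L, w e * edgeDiv e i v := by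
  simp only [wis, Finset.sum_filter, edgeDiv, mul_sub, mul_boole, Finset.sum_sub_distrib]

namespace Honeycomb

lemma sum_bdry_sub_sum_bdry_eq_sum_boundarySign (H : Honeycomb) (i : Fin 3) :
    (∑ e ∈ H.bdry i true, H.w e) - (∑ e ∈ H.bdry i false, H.w e) =
      ∑ e ∈ H.edges, H.w e * boundarySign e i := by
  simp only [bdry, Finset.sum_filter, boundarySign, mul_sub, mul_boole, Finset.sum_sub_distrib]

lemma sum_bdry_sub_sum_bdry_eq_sum_wis (H : Honeycomb) (i : Fin 3) :
    (∑ e ∈ H.bdry i true, H.w e) - (∑ e ∈ H.bdry i false, H.w e) =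
      ∑ v ∈ H.verts, (wis H.edges H.w i true v - wis H.edges H.w i false v) :=
  calc (∑ e ∈ H.bdry i true, H.w e) - (∑ e ∈ H.bdry i false, H.w e)
      = ∑ e ∈ H.edges, H.w e * ∑ v ∈ H.verts, edgeDiv e i v := by
        rw [sum_bdry_sub_sum_bdry_eq_sum_boundarySign]
        refine Finset.sum_congr rfl fun e he => ?_
        have ⟨hline, hperp⟩ := H.pre.1 e he
        rw [sum_edgeDiv_eq_boundarySign H.verts i hline hperp (H.ends_mem e he)]
    _ = ∑ v ∈ H.verts, ∑ e ∈ H.edges, H.w e * edgeDiv e i v := by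
        simp_rw [Finset.mul_sum]
        exact Finset.sum_comm
    _ = _ := by simp_rw [wis_sub_wis]

end Honeycomb

/-- The quantity w(B_i⁺) − w(B_i⁻) is the same for i = 1,2,3. -/
theorem stmt10 (H : Honeycomb) (i j : Fin 3) :
    (∑ e ∈ H.bdry i true, H.w e) - (∑ e ∈ H.bdry i false, H.w e) =
      (∑ e ∈ H.bdry j true, H.w e) - (∑ e ∈ H.bdry j false, H.w e) := by
  rw [H.sum_bdry_sub_sum_bdry_eq_sum_wis i, H.sum_bdry_sub_sum_bdry_eq_sum_wis j]
  exact Finset.sum_congr rfl fun v _ => H.pre.2.2 v i j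
end
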